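/- arXiv:2512.13344 — 2 statements merged into one kernel-verified Lean document; each statement's English description precedes it below -/
import Mathlib

section
/- Let T > 0, n, m ∈ ℕ, and let α : ℝ → ℝ be Lipschitz continuous, strictly increasing, with α(0) = 0. Let f : (ℝ^n × ℝ^m) → ℝ^n, g : (ℝ^n × ℝ) → ℝ^m, and let B : (ℝ^n × ℝ) → ℝ be continuously differentiable. Suppose that for all (y, s) ∈ ℝ^n × [0, T], the inner product of the spatial gradient ∂B/∂x(y, s) with f(y, g(y, s)), plus the time derivative ∂B/∂t(y, s), is at least -α(B(y, s)). Let x : ℝ → ℝ^n be differentiable on [0, T] with x'(t) = f(x(t), g(x(t), t)) for all t ∈ [0, T], and suppose B(x(0), 0) ≥ 0. Then B(x(t), t) ≥ 0 for all t ∈ [0, T]. -/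
open RealInnerProductSpace Set

/-! Along the trajectory, `h t = B (x t, t)` has derivative at least `-α (h t)` by the chain rule and
the barrier condition. Where `h < 0` this bound is nonnegative since `α` is increasing with
`α 0 = 0`, so `h` cannot decrease through a last nonnegative time: on the interval between that
time and a later negative value, `h` would be monotone. -/

theorem nonneg_of_hasDerivAt_nonneg_where_neg {h h' : ℝ → ℝ} {a b : ℝ}
    (hcont : ContinuousOn h (Icc a b)) (hderiv : ∀ t ∈ Ioo a b, HasDerivAt h (h' t) t)
    (hneg : ∀ t ∈ Ioo a b, h t < 0 → 0 ≤ h' t) (ha : 0 ≤ h a) :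
    ∀ t ∈ Icc a b, 0 ≤ h t := by
  intro t₁ ht₁
  by_contra! hlt
  set S : Set ℝ := Icc a t₁ ∩ h ⁻¹' Ici 0
  have hSub : Icc a t₁ ⊆ Icc a b := Icc_subset_Icc le_rfl ht₁.2
  have hSclosed : IsClosed S :=
    (hcont.mono hSub).preimage_isClosed_of_isClosed isClosed_Icc isClosed_Ici
  have hSbdd : BddAbove S := ⟨t₁, fun u hu => hu.1.2⟩
  obtain ⟨⟨hac, hct₁⟩, hhc⟩ : sSup S ∈ S :=
    hSclosed.csSup_mem ⟨a, ⟨le_rfl, ht₁.1⟩, ha⟩ hSbdd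
  set c := sSup S
  have hneg_after : ∀ u ∈ Ioo c t₁, h u < 0 := fun u hu => by
    by_contra! hu0
    exact (le_csSup hSbdd ⟨⟨hac.trans hu.1.le, hu.2.le⟩, hu0⟩).not_gt hu.1
  have hIoo : Ioo c t₁ ⊆ Ioo a b := Ioo_subset_Ioo hac ht₁.2
  have hmono : MonotoneOn h (Icc c t₁) := by
    refine monotoneOn_of_hasDerivWithinAt_nonneg (f' := h') (convex_Icc c t₁)
      (hcont.mono (Icc_subset_Icc hac ht₁.2)) ?_ ?_ <;> rw [interior_Icc]
    · exact fun u hu => (hderiv u (hIoo hu)).hasDerivWithinAt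
    · exact fun u hu => hneg u (hIoo hu) (hneg_after u hu)
  exact hlt.not_ge (hhc.trans (hmono ⟨le_rfl, hct₁⟩ ⟨hct₁, le_rfl⟩ hct₁))

section PartialDerivatives

variable {E : Type*} [NormedAddCommGroup E] [InnerProductSpace ℝ E] [CompleteSpace E]

theorem fderiv_apply_prodMk_one {B : E × ℝ → ℝ} {y : E} {s : ℝ}
    (hB : DifferentiableAt ℝ B (y, s)) (v : E) :
    fderiv ℝ B (y, s) (v, 1) =
      ⟪gradient (fun z => B (z, s)) y, v⟫ + deriv (fun τ => B (y, τ)) s := by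
  have hspace : HasFDerivAt (fun z => B (z, s))
      ((fderiv ℝ B (y, s)).comp (ContinuousLinearMap.inl ℝ E ℝ)) y :=
    hB.hasFDerivAt.comp y (hasFDerivAt_prodMk_left y s)
  have htime : HasDerivAt (fun τ => B (y, τ)) (fderiv ℝ B (y, s) (0, 1)) s :=
    hB.hasFDerivAt.comp_hasDerivAt s ((hasDerivAt_const s y).prodMk (hasDerivAt_id s))
  have hsplit : ((v, 1) : E × ℝ) = (v, 0) + (0, 1) := by simp
  rw [hsplit, map_add, htime.deriv, gradient, InnerProductSpace.toDual_symm_apply,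
    hspace.fderiv]
  rfl

theorem hasDerivAt_comp_prodMk_self {B : E × ℝ → ℝ} {x : ℝ → E} {v : E} {t : ℝ}
    (hB : DifferentiableAt ℝ B (x t, t)) (hx : HasDerivAt x v t) :
    HasDerivAt (fun τ => B (x τ, τ))
      (⟪gradient (fun z => B (z, t)) (x t), v⟫ + deriv (fun τ => B (x t, τ)) t) t := by
  rw [← fderiv_apply_prodMk_one hB]
  exact hB.hasFDerivAt.comp_hasDerivAt (f := fun τ => (x τ, τ)) t (hx.prodMk (hasDerivAt_id t))

end PartialDerivatives

theorem stmt_5_general (T : ℝ) (n m : ℕ) (α : ℝ → ℝ)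
    (hαmono : StrictMono α) (hα0 : α 0 = 0)
    (f : EuclideanSpace ℝ (Fin n) × EuclideanSpace ℝ (Fin m) → EuclideanSpace ℝ (Fin n))
    (g : EuclideanSpace ℝ (Fin n) × ℝ → EuclideanSpace ℝ (Fin m))
    (B : EuclideanSpace ℝ (Fin n) × ℝ → ℝ) (hB : ContDiff ℝ 1 B)
    (hcbf : ∀ (y : EuclideanSpace ℝ (Fin n)), ∀ s ∈ Set.Icc (0 : ℝ) T,
      ⟪gradient (fun z => B (z, s)) y, f (y, g (y, s))⟫
        + deriv (fun τ => B (y, τ)) s ≥ -α (B (y, s)))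
    (x : ℝ → EuclideanSpace ℝ (Fin n))
    (hx : ∀ t ∈ Set.Icc (0 : ℝ) T, HasDerivAt x (f (x t, g (x t, t))) t)
    (hx0 : 0 ≤ B (x 0, 0)) :
    ∀ t ∈ Set.Icc (0 : ℝ) T, 0 ≤ B (x t, t) := by
  have hderiv : ∀ t ∈ Icc 0 T, HasDerivAt (fun τ => B (x τ, τ))
      (⟪gradient (fun z => B (z, t)) (x t), f (x t, g (x t, t))⟫
        + deriv (fun τ => B (x t, τ)) t) t := fun t ht =>
    hasDerivAt_comp_prodMk_self (hB.differentiable one_ne_zero _) (hx t ht)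
  refine nonneg_of_hasDerivAt_nonneg_where_neg
    (fun t ht => (hderiv t ht).continuousAt.continuousWithinAt)
    (fun t ht => hderiv t (Ioo_subset_Icc_self ht)) (fun t ht hneg => ?_) hx0
  have hα_nonpos : α (B (x t, t)) ≤ 0 := hα0 ▸ hαmono.monotone hneg.le
  linarith [hcbf (x t) t (Ioo_subset_Icc_self ht)]

/-- Theorem 1 of the paper in its general form: `α` is a Lipschitz, strictly
increasing extended class-K function with `α 0 = 0`, `B` is a continuously
differentiable time-varying barrier, and the barrier condition holds along the
closed-loop dynamics; then `B (x t, t) ≥ 0` on `[0, T]`. -/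
theorem stmt_5 (T : ℝ) (hT : 0 < T) (n m : ℕ) (α : ℝ → ℝ) (K : NNReal)
    (hαLip : LipschitzWith K α) (hαmono : StrictMono α) (hα0 : α 0 = 0)
    (f : EuclideanSpace ℝ (Fin n) × EuclideanSpace ℝ (Fin m) → EuclideanSpace ℝ (Fin n))
    (g : EuclideanSpace ℝ (Fin n) × ℝ → EuclideanSpace ℝ (Fin m))
    (B : EuclideanSpace ℝ (Fin n) × ℝ → ℝ) (hB : ContDiff ℝ 1 B)
    (hcbf : ∀ (y : EuclideanSpace ℝ (Fin n)), ∀ s ∈ Set.Icc (0 : ℝ) T,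
      ⟪gradient (fun z => B (z, s)) y, f (y, g (y, s))⟫
        + deriv (fun τ => B (y, τ)) s ≥ -α (B (y, s)))
    (x : ℝ → EuclideanSpace ℝ (Fin n))
    (hx : ∀ t ∈ Set.Icc (0 : ℝ) T, HasDerivAt x (f (x t, g (x t, t))) t)
    (hx0 : 0 ≤ B (x 0, 0)) :
    ∀ t ∈ Set.Icc (0 : ℝ) T, 0 ≤ B (x t, t) :=
  stmt_5_general T n m α hαmono hα0 f g B hB hcbf x hx hx0
end

section
/- Let n, m ∈ ℕ and α > 0. Let B : (ℝ^n × ℝ) → ℝ be Lipschitz with constant L_b, and let G_x : (ℝ^n × ℝ) → ℝ^n and G_t : (ℝ^n × ℝ) → ℝ (the spatial gradient and time derivative of B) each be Lipschitz with constant L_db and satisfy ‖(G_x(w), G_t(w))‖₂ ≤ M_b for all w. Let f : (ℝ^n × ℝ^m) → ℝ^n satisfy ‖f(x₁, u) − f(x₂, u)‖₂ ≤ L_x ‖x₁ − x₂‖₂, ‖f(x, u₁) − f(x, u₂)‖₂ ≤ L_u ‖u₁ − u₂‖₂, and ‖f(x, u)‖₂ ≤ M_f for all arguments, and let g : (ℝ^n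 × ℝ) → ℝ^m be Lipschitz with constant L_g. Then the function q₃ : ℝ^n × ℝ → ℝ defined by q₃(x, t) = −⟨G_x(x, t), f(x, g(x, t))⟩ − G_t(x, t) − α · B(x, t) is Lipschitz with constant L_db (M_f + 1) + M_b (L_x + L_u L_g) + α L_b. -/
/-!
Of the three terms of `q₃`, the barrier and time-derivative terms are Lipschitz by assumption.
The inner-product term is handled by moving one argument at a time: Cauchy–Schwarz bounds the
variation of `Gx` against `‖f‖ ≤ M_f`, and the variation of the closed-loop field
`(x, t) ↦ f (x, g (x, t))`, which is Lipschitz with constant `L_x + L_u L_g`, against `‖Gx‖ ≤ M_b`.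
-/

open RealInnerProductSpace

/-- Euclidean norm of the increment on the product space `ℝ^n × ℝ`
(the Euclidean product norm of `p - q`). -/
noncomputable def prodDist2 {n : ℕ} (p q : EuclideanSpace ℝ (Fin n) × ℝ) : ℝ :=
  Real.sqrt (‖p.1 - q.1‖ ^ 2 + |p.2 - q.2| ^ 2)

lemma norm_fst_sub_le_prodDist2 {n : ℕ} (p q : EuclideanSpace ℝ (Fin n) × ℝ) :
    ‖p.1 - q.1‖ ≤ prodDist2 p q :=
  Real.le_sqrt_of_sq_le (le_add_of_nonneg_right (sq_nonneg _))

lemma norm_sub_le_of_lipschitz_fst_snd {E F G : Type*} [SeminormedAddCommGroup E]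
    [SeminormedAddCommGroup F] [SeminormedAddCommGroup G] {f : E × F → G} {Lx Lu : ℝ}
    (hfx : ∀ x₁ x₂ u, ‖f (x₁, u) - f (x₂, u)‖ ≤ Lx * ‖x₁ - x₂‖)
    (hfu : ∀ x u₁ u₂, ‖f (x, u₁) - f (x, u₂)‖ ≤ Lu * ‖u₁ - u₂‖) (x₁ x₂ : E) (u₁ u₂ : F) :
    ‖f (x₁, u₁) - f (x₂, u₂)‖ ≤ Lx * ‖x₁ - x₂‖ + Lu * ‖u₁ - u₂‖ :=
  calc ‖f (x₁, u₁) - f (x₂, u₂)‖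
      ≤ ‖f (x₁, u₁) - f (x₂, u₁)‖ + ‖f (x₂, u₁) - f (x₂, u₂)‖ :=
        norm_sub_le_norm_sub_add_norm_sub _ _ _
    _ ≤ Lx * ‖x₁ - x₂‖ + Lu * ‖u₁ - u₂‖ := add_le_add (hfx _ _ _) (hfu _ _ _)

lemma abs_inner_sub_inner_le {E : Type*} [NormedAddCommGroup E] [InnerProductSpace ℝ E]
    (a₁ a₂ b₁ b₂ : E) :
    |⟪a₁, b₁⟫ - ⟪a₂, b₂⟫| ≤ ‖a₁ - a₂‖ * ‖b₁‖ + ‖a₂‖ * ‖b₁ - b₂‖ := by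
  have hsplit : ⟪a₁, b₁⟫ - ⟪a₂, b₂⟫ = ⟪a₁ - a₂, b₁⟫ + ⟪a₂, b₁ - b₂⟫ := by
    rw [inner_sub_left, inner_sub_right]; ring
  rw [hsplit]
  exact (abs_add_le _ _).trans
    (add_le_add (abs_real_inner_le_norm _ _) (abs_real_inner_le_norm _ _))

theorem stmt_10_general (n m : ℕ) (α : ℝ) (hα : 0 < α)
    (B : EuclideanSpace ℝ (Fin n) × ℝ → ℝ)
    (Gx : EuclideanSpace ℝ (Fin n) × ℝ → EuclideanSpace ℝ (Fin n))
    (Gt : EuclideanSpace ℝ (Fin n) × ℝ → ℝ)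
    (Lb Ldb Mb Lx Lu Mf Lg : ℝ)
    (hLdb : 0 ≤ Ldb) (hMb : 0 ≤ Mb)
    (hLx : 0 ≤ Lx) (hLu : 0 ≤ Lu)
    (hB : ∀ p q : EuclideanSpace ℝ (Fin n) × ℝ, |B p - B q| ≤ Lb * prodDist2 p q)
    (hGx : ∀ p q : EuclideanSpace ℝ (Fin n) × ℝ, ‖Gx p - Gx q‖ ≤ Ldb * prodDist2 p q)
    (hGt : ∀ p q : EuclideanSpace ℝ (Fin n) × ℝ, |Gt p - Gt q| ≤ Ldb * prodDist2 p q)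
    (hMbBound : ∀ w : EuclideanSpace ℝ (Fin n) × ℝ,
      Real.sqrt (‖Gx w‖ ^ 2 + |Gt w| ^ 2) ≤ Mb)
    (f : EuclideanSpace ℝ (Fin n) × EuclideanSpace ℝ (Fin m) → EuclideanSpace ℝ (Fin n))
    (hfx : ∀ (x₁ x₂ : EuclideanSpace ℝ (Fin n)) (u : EuclideanSpace ℝ (Fin m)),
      ‖f (x₁, u) - f (x₂, u)‖ ≤ Lx * ‖x₁ - x₂‖)
    (hfu : ∀ (x : EuclideanSpace ℝ (Fin n)) (u₁ u₂ : EuclideanSpace ℝ (Fin m)),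
      ‖f (x, u₁) - f (x, u₂)‖ ≤ Lu * ‖u₁ - u₂‖)
    (hfbd : ∀ (x : EuclideanSpace ℝ (Fin n)) (u : EuclideanSpace ℝ (Fin m)),
      ‖f (x, u)‖ ≤ Mf)
    (g : EuclideanSpace ℝ (Fin n) × ℝ → EuclideanSpace ℝ (Fin m))
    (hg : ∀ p q : EuclideanSpace ℝ (Fin n) × ℝ, ‖g p - g q‖ ≤ Lg * prodDist2 p q)
    (q₃ : EuclideanSpace ℝ (Fin n) × ℝ → ℝ)
    (hq₃ : ∀ w : EuclideanSpace ℝ (Fin n) × ℝ,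
      q₃ w = -⟪Gx w, f (w.1, g w)⟫ - Gt w - α * B w) :
    ∀ p q : EuclideanSpace ℝ (Fin n) × ℝ,
      |q₃ p - q₃ q| ≤ (Ldb * (Mf + 1) + Mb * (Lx + Lu * Lg) + α * Lb) * prodDist2 p q := by
  intro p q
  set d := prodDist2 p q
  have hGxq : ‖Gx q‖ ≤ Mb :=
    (Real.le_sqrt_of_sq_le (le_add_of_nonneg_right (sq_nonneg _))).trans (hMbBound q)
  have hf : ‖f (p.1, g p) - f (q.1, g q)‖ ≤ (Lx + Lu * Lg) * d := by
    have := norm_sub_le_of_lipschitz_fst_snd hfx hfu p.1 q.1 (g p) (g q)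
    linarith [mul_le_mul_of_nonneg_left (norm_fst_sub_le_prodDist2 p q) hLx,
      mul_le_mul_of_nonneg_left (hg p q) hLu]
  have hinner : |⟪Gx p, f (p.1, g p)⟫ - ⟪Gx q, f (q.1, g q)⟫|
      ≤ Ldb * d * Mf + Mb * ((Lx + Lu * Lg) * d) :=
    (abs_inner_sub_inner_le _ _ _ _).trans <| add_le_add
      (mul_le_mul (hGx p q) (hfbd _ _) (norm_nonneg _) (mul_nonneg hLdb (Real.sqrt_nonneg _)))
      (mul_le_mul hGxq hf (norm_nonneg _) hMb)
  have hsplit : q₃ p - q₃ q = -(⟪Gx p, f (p.1, g p)⟫ - ⟪Gx q, f (q.1, g q)⟫) + -(Gt p - Gt q)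
      + -(α * (B p - B q)) := by
    rw [hq₃ p, hq₃ q]; ring
  rw [hsplit]
  refine (abs_add_three _ _ _).trans ?_
  rw [abs_neg, abs_neg, abs_neg, abs_mul, abs_of_pos hα]
  linarith [mul_le_mul_of_nonneg_left (hB p q) hα.le, hGt p q]

/-- Explicit Lipschitz constant `L₃ = L_db (M_f + 1) + M_b (L_x + L_u L_g) + α L_b`
of the barrier-derivative constraint
`q₃ (x, t) = -⟪∂B/∂x (x,t), f (x, g (x,t))⟫ - ∂B/∂t (x,t) - α B (x,t)`
from Theorem 3 of the paper, under Assumption 2. -/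
theorem stmt_10 (n m : ℕ) (α : ℝ) (hα : 0 < α)
    (B : EuclideanSpace ℝ (Fin n) × ℝ → ℝ)
    (Gx : EuclideanSpace ℝ (Fin n) × ℝ → EuclideanSpace ℝ (Fin n))
    (Gt : EuclideanSpace ℝ (Fin n) × ℝ → ℝ)
    (Lb Ldb Mb Lx Lu Mf Lg : ℝ)
    (hLb : 0 ≤ Lb) (hLdb : 0 ≤ Ldb) (hMb : 0 ≤ Mb)
    (hLx : 0 ≤ Lx) (hLu : 0 ≤ Lu) (hMf : 0 ≤ Mf) (hLg : 0 ≤ Lg)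
    (hB : ∀ p q : EuclideanSpace ℝ (Fin n) × ℝ, |B p - B q| ≤ Lb * prodDist2 p q)
    (hGx : ∀ p q : EuclideanSpace ℝ (Fin n) × ℝ, ‖Gx p - Gx q‖ ≤ Ldb * prodDist2 p q)
    (hGt : ∀ p q : EuclideanSpace ℝ (Fin n) × ℝ, |Gt p - Gt q| ≤ Ldb * prodDist2 p q)
    (hMbBound : ∀ w : EuclideanSpace ℝ (Fin n) × ℝ,
      Real.sqrt (‖Gx w‖ ^ 2 + |Gt w| ^ 2) ≤ Mb)
    (f : EuclideanSpace ℝ (Fin n) × EuclideanSpace ℝ (Fin m) → EuclideanSpace ℝ (Fin n))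
    (hfx : ∀ (x₁ x₂ : EuclideanSpace ℝ (Fin n)) (u : EuclideanSpace ℝ (Fin m)),
      ‖f (x₁, u) - f (x₂, u)‖ ≤ Lx * ‖x₁ - x₂‖)
    (hfu : ∀ (x : EuclideanSpace ℝ (Fin n)) (u₁ u₂ : EuclideanSpace ℝ (Fin m)),
      ‖f (x, u₁) - f (x, u₂)‖ ≤ Lu * ‖u₁ - u₂‖)
    (hfbd : ∀ (x : EuclideanSpace ℝ (Fin n)) (u : EuclideanSpace ℝ (Fin m)),
      ‖f (x, u)‖ ≤ Mf)
    (g : EuclideanSpace ℝ (Fin n) × ℝ → EuclideanSpace ℝ (Fin m))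
    (hg : ∀ p q : EuclideanSpace ℝ (Fin n) × ℝ, ‖g p - g q‖ ≤ Lg * prodDist2 p q)
    (q₃ : EuclideanSpace ℝ (Fin n) × ℝ → ℝ)
    (hq₃ : ∀ w : EuclideanSpace ℝ (Fin n) × ℝ,
      q₃ w = -⟪Gx w, f (w.1, g w)⟫ - Gt w - α * B w) :
    ∀ p q : EuclideanSpace ℝ (Fin n) × ℝ,
      |q₃ p - q₃ q| ≤ (Ldb * (Mf + 1) + Mb * (Lx + Lu * Lg) + α * Lb) * prodDist2 p q :=
  stmt_10_general n m α hα B Gx Gt Lb Ldb Mb Lx Lu Mf Lg hLdb hMb hLx hLu hB hGx hGt hMbBound f hfx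
    hfu hfbd g hg q₃ hq₃
end
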